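/- arXiv:1510.03200 — 6 statements merged into one kernel-verified Lean document; each statement's English description precedes it below -/
import Mathlib

section
/- If a₀, a₁, ..., aₙ are positive reals with a₀ ≥ a₁ + a₂ + ... + aₙ, then ∫₀^∞ ∏ₖ₌₀ⁿ (sin(aₖx)/x) dx = (π/2)·a₁a₂⋯aₙ. -/
/-!
Since `sin (b x) / x = ∫₀ᵇ cos (t x) dt` and
`2 sin (c x) cos (t x) = sin ((c + t) x) + sin ((c - t) x)`, exchanging the order of integration
turns the integral of `sin (c x) / x` times `n` factors `sin (aₖ x) / x` into the average over
`t ∈ (0, aₙ]` of two such integrals with one factor fewer, whose parameters `c ± t` still dominate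
the sum of the remaining `aₖ`. By induction on the number of factors, with a bound uniform in the
truncation point for dominated convergence, each of these tends to `π / 2` times the product of the
remaining `aₖ`; averaging over `t` supplies the missing factor `aₙ`. The base case is Dirichlet's
integral `∫₀^∞ sin x / x dx = π / 2`, obtained from `1 / x = ∫₀^∞ e^{-x t} dt`.
-/

open Real Filter MeasureTheory Set
open scoped Topology

theorem integral_sin_mul_exp_neg_mul (t T : ℝ) :
    ∫ x in (0:ℝ)..T, sin x * exp (-(x * t)) =
      (1 - exp (-(T * t)) * (cos T + t * sin T)) / (1 + t ^ 2) := by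
  have hderiv : ∀ x, HasDerivAt (fun x => -(exp (-(x * t)) * (cos x + t * sin x)) / (1 + t ^ 2))
      (sin x * exp (-(x * t))) x := by
    intro x
    refine ((((hasDerivAt_id x).mul_const t).neg.exp.mul
      ((hasDerivAt_cos x).add ((hasDerivAt_sin x).const_mul t))).neg.div_const
        (1 + t ^ 2)).congr_deriv ?_
    simp only [Pi.neg_apply, Pi.add_apply, id]
    field_simp
    ring
  rw [intervalIntegral.integral_eq_sub_of_hasDerivAt (fun x _ => hderiv x)
    (Continuous.intervalIntegrable (by fun_prop) 0 T)]
  simp only [zero_mul, neg_zero, exp_zero, cos_zero, sin_zero, mul_zero, add_zero, mul_one]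
  ring

theorem integral_exp_neg_mul_Ioi {x : ℝ} (hx : 0 < x) :
    ∫ t in Ioi (0:ℝ), exp (-(x * t)) = x⁻¹ := by
  simpa [neg_mul] using integral_exp_mul_Ioi (neg_neg_of_pos hx) 0

theorem integrableOn_exp_neg_mul_Ioi {x : ℝ} (hx : 0 < x) :
    IntegrableOn (fun t => exp (-(x * t))) (Ioi 0) := by
  simpa [neg_mul] using integrableOn_exp_mul_Ioi (neg_neg_of_pos hx) 0

theorem integrable_sin_mul_exp_neg_mul_prod (T : ℝ) :
    Integrable (fun p : ℝ × ℝ => sin p.1 * exp (-(p.1 * p.2)))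
      ((volume.restrict (Ioc 0 T)).prod (volume.restrict (Ioi 0))) := by
  have hmeas : AEStronglyMeasurable (fun p : ℝ × ℝ => sin p.1 * exp (-(p.1 * p.2)))
      ((volume.restrict (Ioc 0 T)).prod (volume.restrict (Ioi 0))) :=
    (by fun_prop : Continuous fun p : ℝ × ℝ => sin p.1 * exp (-(p.1 * p.2))).aestronglyMeasurable
  refine (integrable_prod_iff hmeas).2 ⟨?_, ?_⟩
  · filter_upwards [ae_restrict_mem measurableSet_Ioc] with x hx
    exact (integrableOn_exp_neg_mul_Ioi hx.1).const_mul _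
  · refine Integrable.mono' (integrable_const (1:ℝ)) hmeas.norm.integral_prod_right' ?_
    filter_upwards [ae_restrict_mem measurableSet_Ioc] with x hx
    have hint : ∫ t in Ioi 0, ‖sin x * exp (-(x * t))‖ = |sin x| / x := by
      simp only [norm_mul, norm_eq_abs, abs_exp]
      rw [integral_const_mul, integral_exp_neg_mul_Ioi hx.1, div_eq_mul_inv]
    rw [norm_eq_abs, hint, abs_div, abs_abs, abs_of_pos hx.1, div_le_one hx.1]
    exact abs_sin_le_abs.trans (abs_of_pos hx.1).le

theorem integral_sin_div_eq_integral_Ioi {T : ℝ} (hT : 0 ≤ T) :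
    ∫ x in Ioc 0 T, sin x / x =
      ∫ t in Ioi 0, (1 - exp (-(T * t)) * (cos T + t * sin T)) / (1 + t ^ 2) := by
  have hlaplace : ∫ x in Ioc 0 T, sin x / x =
      ∫ x in Ioc 0 T, ∫ t in Ioi 0, sin x * exp (-(x * t)) := by
    refine setIntegral_congr_fun measurableSet_Ioc fun x hx => ?_
    rw [integral_const_mul, integral_exp_neg_mul_Ioi hx.1, div_eq_mul_inv]
  rw [hlaplace, integral_integral_swap (integrable_sin_mul_exp_neg_mul_prod T)]
  refine integral_congr_ae (ae_of_all _ fun t => ?_)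
  dsimp only
  rw [← intervalIntegral.integral_of_le hT, integral_sin_mul_exp_neg_mul]

theorem abs_cos_add_mul_sin_le (T : ℝ) {t : ℝ} (ht : 0 ≤ t) : |cos T + t * sin T| ≤ 1 + t := by
  calc |cos T + t * sin T| ≤ |cos T| + t * |sin T| := by
        simpa [abs_mul, abs_of_nonneg ht] using abs_add_le (cos T) (t * sin T)
    _ ≤ 1 + t * 1 := by gcongr; exacts [abs_cos_le_one T, abs_sin_le_one T]
    _ = 1 + t := by ring

theorem tendsto_integral_sin_div :
    Tendsto (fun T => ∫ x in Ioc 0 T, sin x / x) atTop (𝓝 (π / 2)) := by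
  have hlim : Tendsto
      (fun T => ∫ t in Ioi 0, (1 - exp (-(T * t)) * (cos T + t * sin T)) / (1 + t ^ 2))
      atTop (𝓝 (∫ t in Ioi 0, (1 + t ^ 2)⁻¹)) := by
    refine tendsto_integral_filter_of_dominated_convergence (fun t => 2 * (1 + t ^ 2)⁻¹)
      (Eventually.of_forall fun T => Continuous.aestronglyMeasurable
        (by fun_prop (disch := intro; positivity))) ?_
      (integrable_inv_one_add_sq.integrableOn.const_mul 2) ?_
    · filter_upwards [eventually_ge_atTop 1] with T hT
      filter_upwards [ae_restrict_mem measurableSet_Ioi] with t ht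
      have ht : 0 ≤ t := le_of_lt ht
      -- `1 + t ≤ exp t` makes the oscillating term at most `1` once `T ≥ 1`
      have hdecay : exp (-(T * t)) * |cos T + t * sin T| ≤ 1 :=
        calc exp (-(T * t)) * |cos T + t * sin T| ≤ exp (-t) * exp t := by
              gcongr
              · nlinarith
              · exact (abs_cos_add_mul_sin_le T ht).trans (by linarith [add_one_le_exp t])
          _ = 1 := by rw [← exp_add, neg_add_cancel, exp_zero]
      rw [norm_eq_abs, abs_div, abs_of_pos (by positivity : (0:ℝ) < 1 + t ^ 2), div_eq_mul_inv]
      gcongr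
      calc |1 - exp (-(T * t)) * (cos T + t * sin T)|
          ≤ 1 + exp (-(T * t)) * |cos T + t * sin T| := by
            simpa [abs_mul, abs_exp] using abs_sub (1 : ℝ) (exp (-(T * t)) * (cos T + t * sin T))
        _ ≤ 2 := by linarith
    · filter_upwards [ae_restrict_mem measurableSet_Ioi] with t ht
      have hdecay : Tendsto (fun T => exp (-(T * t)) * (1 + t)) atTop (𝓝 0) := by
        simpa using (tendsto_exp_neg_atTop_nhds_zero.comp
          (tendsto_id.atTop_mul_const ht)).mul_const (1 + t)
      have hosc : Tendsto (fun T => exp (-(T * t)) * (cos T + t * sin T)) atTop (𝓝 0) :=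
        squeeze_zero_norm (fun T => by
          rw [norm_mul, norm_eq_abs, abs_exp]
          exact mul_le_mul_of_nonneg_left (abs_cos_add_mul_sin_le T (le_of_lt ht)) (exp_pos _).le)
          hdecay
      simpa [div_eq_mul_inv] using (hosc.const_sub 1).div_const (1 + t ^ 2)
  rw [integral_Ioi_inv_one_add_sq, arctan_zero, sub_zero] at hlim
  refine hlim.congr' ?_
  filter_upwards [eventually_ge_atTop 0] with T hT
  exact (integral_sin_div_eq_integral_Ioi hT).symm

theorem abs_sin_mul_div_le (y x : ℝ) : |sin (y * x) / x| ≤ |y| := by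
  rcases eq_or_ne x 0 with rfl | hx
  · simp
  · rw [abs_div, div_le_iff₀ (abs_pos.2 hx), ← abs_mul]
    exact abs_sin_le_abs

theorem exists_abs_integral_sin_div_le : ∃ C, ∀ y, |∫ x in Ioc 0 y, sin x / x| ≤ C := by
  obtain ⟨M, hM⟩ := eventually_atTop.1
    (tendsto_integral_sin_div.eventually (eventually_abs_sub_lt (π / 2) one_pos))
  refine ⟨max (max M 0) (π / 2 + 1), fun y => ?_⟩
  rcases le_or_gt y M with hyM | hyM
  · calc |∫ x in Ioc 0 y, sin x / x| ≤ 1 * volume.real (Ioc (0:ℝ) y) :=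
          norm_setIntegral_le_of_norm_le_const (f := fun x => sin x / x) measure_Ioc_lt_top
            fun x _ => by simpa [abs_div] using abs_sin_mul_div_le 1 x
      _ ≤ max (max M 0) (π / 2 + 1) := by
          rw [Real.volume_real_Ioc, sub_zero, one_mul]
          exact le_max_of_le_left (max_le_max_right 0 hyM)
  · have hnear := abs_sub_lt_iff.1 (hM y hyM.le)
    refine le_max_of_le_right (abs_le.2 ⟨?_, ?_⟩) <;> linarith [pi_pos]

theorem integral_sin_mul_div_Ioc {c : ℝ} (hc : 0 < c) {T : ℝ} (hT : 0 ≤ T) :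
    ∫ x in Ioc 0 T, sin (c * x) / x = ∫ x in Ioc 0 (c * T), sin x / x := by
  have hscale : ∀ x, sin (c * x) / x = c * (sin (c * x) / (c * x)) := fun x => by
    rcases eq_or_ne x 0 with rfl | hx
    · simp
    · field_simp
  simp_rw [← intervalIntegral.integral_of_le hT,
    ← intervalIntegral.integral_of_le (mul_nonneg hc.le hT), hscale,
    intervalIntegral.integral_const_mul,
    intervalIntegral.integral_comp_mul_left (fun x => sin x / x) hc.ne', mul_zero, smul_eq_mul,
    mul_inv_cancel_left₀ hc.ne']

theorem tendsto_integral_sin_mul_div {c : ℝ} (hc : 0 < c) :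
    Tendsto (fun T => ∫ x in Ioc 0 T, sin (c * x) / x) atTop (𝓝 (π / 2)) := by
  refine (tendsto_integral_sin_div.comp (tendsto_id.const_mul_atTop hc)).congr' ?_
  filter_upwards [eventually_ge_atTop 0] with T hT
  exact (integral_sin_mul_div_Ioc hc hT).symm

theorem exists_abs_integral_sin_mul_div_le :
    ∃ C, ∀ c T, 0 ≤ c → 0 ≤ T → |∫ x in Ioc 0 T, sin (c * x) / x| ≤ C := by
  obtain ⟨C, hC⟩ := exists_abs_integral_sin_div_le
  refine ⟨C, fun c T hc hT => ?_⟩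
  rcases hc.eq_or_lt with rfl | hc
  · simpa using (abs_nonneg _).trans (hC 0)
  · rw [integral_sin_mul_div_Ioc hc hT]
    exact hC _

theorem integrableOn_sin_mul_div_mul {g : ℝ → ℝ} {s : Set ℝ} (hg : IntegrableOn g s) (c : ℝ) :
    IntegrableOn (fun x => sin (c * x) / x * g x) s :=
  hg.bdd_mul (by fun_prop : Measurable fun x => sin (c * x) / x).aestronglyMeasurable
    (ae_of_all _ fun x => abs_sin_mul_div_le c x)

theorem integrableOn_prod_sin_mul_div {ι : Type*} (s : Finset ι) (a : ι → ℝ) (T : ℝ) :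
    IntegrableOn (fun x => ∏ k ∈ s, sin (a k * x) / x) (Ioc 0 T) := by
  classical
  induction s using Finset.induction_on with
  | empty => simp
  | insert j s hj ih =>
    simpa only [Finset.prod_insert hj] using integrableOn_sin_mul_div_mul ih (a j)

theorem sin_mul_cos_div_eq (c t x : ℝ) :
    sin (c * x) * cos (t * x) / x = (sin ((c + t) * x) / x + sin ((c - t) * x) / x) / 2 := by
  rw [add_mul, sub_mul, sin_add, sin_sub]
  ring

theorem integral_cos_mul_Ioc {x : ℝ} (hx : x ≠ 0) {b : ℝ} (hb : 0 ≤ b) :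
    ∫ t in Ioc 0 b, cos (t * x) = sin (b * x) / x := by
  rw [← intervalIntegral.integral_of_le hb, intervalIntegral.integral_comp_mul_right cos hx]
  simp [div_eq_inv_mul]

theorem integral_sin_mul_div_mul_sin_mul_div_mul {g : ℝ → ℝ} {T b : ℝ} (hb : 0 ≤ b)
    (hg : IntegrableOn g (Ioc 0 T)) (c : ℝ) :
    ∫ x in Ioc 0 T, sin (c * x) / x * (sin (b * x) / x * g x) =
      ∫ t in Ioc 0 b, ((∫ x in Ioc 0 T, sin ((c + t) * x) / x * g x) +
        ∫ x in Ioc 0 T, sin ((c - t) * x) / x * g x) / 2 := by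
  set F : ℝ × ℝ → ℝ := fun p => sin (c * p.1) * cos (p.2 * p.1) / p.1 * g p.1
  have hF : Integrable F ((volume.restrict (Ioc 0 T)).prod (volume.restrict (Ioc 0 b))) := by
    refine Integrable.mono' ((hg.norm.const_mul |c|).mul_prod (integrable_const (1:ℝ))) ?_
      (ae_of_all _ fun p => ?_)
    · exact ((by fun_prop : Measurable fun p : ℝ × ℝ => sin (c * p.1) * cos (p.2 * p.1) / p.1)
        |>.aestronglyMeasurable).mul hg.aestronglyMeasurable.comp_fst
    · rw [norm_mul, mul_one, mul_div_right_comm, norm_mul]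
      gcongr
      simpa [abs_div] using mul_le_mul (abs_sin_mul_div_le c p.1) (abs_cos_le_one _)
        (abs_nonneg _) (abs_nonneg c)
  calc ∫ x in Ioc 0 T, sin (c * x) / x * (sin (b * x) / x * g x)
      = ∫ x in Ioc 0 T, ∫ t in Ioc 0 b, F (x, t) := by
        refine setIntegral_congr_fun measurableSet_Ioc fun x hx => ?_
        simp only [F, mul_div_right_comm _ (cos _), mul_right_comm _ (cos _)]
        rw [integral_const_mul, integral_cos_mul_Ioc hx.1.ne' hb]
        ring
    _ = ∫ t in Ioc 0 b, ∫ x in Ioc 0 T, F (x, t) := integral_integral_swap hF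
    _ = _ := by
        refine setIntegral_congr_fun measurableSet_Ioc fun t _ => ?_
        have hF_eq : ∀ x,
            F (x, t) = (sin ((c + t) * x) / x * g x + sin ((c - t) * x) / x * g x) / 2 :=
          fun x => by simp only [F, sin_mul_cos_div_eq]; ring
        simp only [hF_eq]
        rw [integral_div, integral_add (integrableOn_sin_mul_div_mul hg _)
          (integrableOn_sin_mul_div_mul hg _)]

theorem measurable_integral_sin_mul_div_mul {g : ℝ → ℝ} (hg : Measurable g)
    (μ : Measure ℝ) [SFinite μ] : Measurable fun y => ∫ x, sin (y * x) / x * g x ∂μ :=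
  (StronglyMeasurable.integral_prod_right (f := fun y x => sin (y * x) / x * g x)
    (by fun_prop : Measurable _).stronglyMeasurable).measurable

section BorweinIntegral

variable {ι : Type*} (a : ι → ℝ)

theorem exists_abs_integral_sin_mul_div_mul_prod_le (s : Finset ι) (ha : ∀ k ∈ s, 0 ≤ a k) :
    ∃ C, ∀ c T, ∑ k ∈ s, a k ≤ c → 0 ≤ T →
      |∫ x in Ioc 0 T, sin (c * x) / x * ∏ k ∈ s, sin (a k * x) / x| ≤ C := by
  classical
  induction s using Finset.induction_on with
  | empty => simpa using exists_abs_integral_sin_mul_div_le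
  | insert j s hj ih =>
    obtain ⟨C, hC⟩ := ih fun k hk => ha k (Finset.mem_insert_of_mem hk)
    have haj := ha j (Finset.mem_insert_self j s)
    refine ⟨C * a j, fun c T hc hT => ?_⟩
    rw [Finset.sum_insert hj] at hc
    simp only [Finset.prod_insert hj]
    rw [integral_sin_mul_div_mul_sin_mul_div_mul haj (integrableOn_prod_sin_mul_div s a T), ←
      norm_eq_abs]
    refine (norm_setIntegral_le_of_norm_le_const (s := Ioc 0 (a j)) (μ := volume)
      measure_Ioc_lt_top fun t ht => ?_).trans_eq (by rw [Real.volume_real_Ioc_of_le haj, sub_zero])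
    have h₁ := hC (c + t) T (by linarith [ht.1]) hT
    have h₂ := hC (c - t) T (by linarith [ht.2]) hT
    rw [abs_le] at h₁ h₂
    rw [norm_eq_abs, abs_le]
    constructor <;> linarith

theorem tendsto_integral_sin_mul_div_mul_prod (s : Finset ι) (ha : ∀ k ∈ s, 0 ≤ a k) {c : ℝ}
    (hc : 0 < c) (hsum : ∑ k ∈ s, a k ≤ c) :
    Tendsto (fun T => ∫ x in Ioc 0 T, sin (c * x) / x * ∏ k ∈ s, sin (a k * x) / x) atTop
      (𝓝 (π / 2 * ∏ k ∈ s, a k)) := by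
  classical
  induction s using Finset.induction_on generalizing c with
  | empty => simpa using tendsto_integral_sin_mul_div hc
  | insert j s hj ih =>
    have ha' : ∀ k ∈ s, 0 ≤ a k := fun k hk => ha k (Finset.mem_insert_of_mem hk)
    have haj := ha j (Finset.mem_insert_self j s)
    obtain ⟨C, hC⟩ := exists_abs_integral_sin_mul_div_mul_prod_le a s ha'
    rw [Finset.sum_insert hj] at hsum
    simp only [Finset.prod_insert hj,
      integral_sin_mul_div_mul_sin_mul_div_mul haj (integrableOn_prod_sin_mul_div s a _)]
    have hval : π / 2 * (a j * ∏ k ∈ s, a k) = ∫ t in Ioc 0 (a j), π / 2 * ∏ k ∈ s, a k := by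
      rw [setIntegral_const, Real.volume_real_Ioc_of_le haj, sub_zero, smul_eq_mul, mul_left_comm]
    rw [hval]
    refine tendsto_integral_filter_of_dominated_convergence (fun _ => C) ?_ ?_
      (integrable_const C) ?_
    · refine Eventually.of_forall fun T => ?_
      have hJ := measurable_integral_sin_mul_div_mul
        (by fun_prop : Measurable fun x => ∏ k ∈ s, sin (a k * x) / x) (volume.restrict (Ioc 0 T))
      exact (((hJ.comp (measurable_const_add c)).add
        (hJ.comp (measurable_const_sub c))).div_const 2).aestronglyMeasurable
    · filter_upwards [eventually_ge_atTop 0] with T hT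
      filter_upwards [ae_restrict_mem measurableSet_Ioc] with t ht
      have h₁ := hC (c + t) T (by linarith [ht.1]) hT
      have h₂ := hC (c - t) T (by linarith [ht.2]) hT
      rw [abs_le] at h₁ h₂
      rw [norm_eq_abs, abs_le]
      constructor <;> linarith
    · filter_upwards [ae_restrict_mem measurableSet_Ioc, ae_restrict_of_ae (volume.ae_ne c)]
        with t ht htc
      have hct : 0 < c - t :=
        sub_pos.2 (lt_of_le_of_ne (by linarith [ht.2, Finset.sum_nonneg ha']) htc)
      simpa using ((ih ha' (by linarith [ht.1]) (by linarith [ht.1])).add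
        (ih ha' hct (by linarith [ht.2]))).div_const 2

end BorweinIntegral

theorem sinc_prod_integral_general (n : ℕ) (a : ℕ → ℝ)
    (hpos : ∀ k ≤ n, 0 < a k)
    (hdom : a 0 ≥ ∑ k ∈ Finset.Icc 1 n, a k) :
    Tendsto (fun T : ℝ => ∫ x in (0:ℝ)..T, ∏ k ∈ Finset.range (n+1), Real.sin (a k * x) / x)
      atTop (nhds (π / 2 * ∏ k ∈ Finset.Icc 1 n, a k)) := by
  have hsplit : ∀ x : ℝ, ∏ k ∈ Finset.range (n + 1), sin (a k * x) / x =
      sin (a 0 * x) / x * ∏ k ∈ Finset.Icc 1 n, sin (a k * x) / x := fun x => by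
    rw [Finset.range_eq_Ico, Finset.prod_eq_prod_Ico_succ_bot (Nat.zero_lt_succ n), zero_add,
      Nat.succ_eq_add_one, Finset.Ico_add_one_right_eq_Icc]
  refine (tendsto_integral_sin_mul_div_mul_prod a (Finset.Icc 1 n)
    (fun k hk => (hpos k (Finset.mem_Icc.1 hk).2).le) (hpos 0 n.zero_le) hdom).congr' ?_
  filter_upwards [eventually_ge_atTop 0] with T hT
  simp only [intervalIntegral.integral_of_le hT, hsplit]

theorem sinc_prod_integral (n : ℕ) (hn : 1 ≤ n) (a : ℕ → ℝ)
    (hpos : ∀ k ≤ n, 0 < a k)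
    (hdom : a 0 ≥ ∑ k ∈ Finset.Icc 1 n, a k) :
    Tendsto (fun T : ℝ => ∫ x in (0:ℝ)..T, ∏ k ∈ Finset.range (n+1), Real.sin (a k * x) / x)
      atTop (nhds (π / 2 * ∏ k ∈ Finset.Icc 1 n, a k)) :=
  sinc_prod_integral_general n a hpos hdom
end

section
/- ∫₀^∞ sinc(x)·sinc(x)·sinc(x/3) dx = 11π/24, where sinc(x) = sin(x)/x for x ≠ 0 and sinc(0) = 1. -/
/-!
By product-to-sum, `sinc x ^ 2 * sinc (x / 3) = φ x / x ^ 3` with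
`φ x = 3 sin² x sin (x / 3) = 3/2 sin (x/3) - 3/4 sin (7x/3) + 3/4 sin (5x/3)`.
As `φ` vanishes to third order at `0`, integrating by parts twice turns `∫₀ᵀ φ / x³` into a
boundary term of size `O(1/T)` plus `∫₀ᵀ φ'' / (2x)`, a combination of the Dirichlet integrals
`∫₀^∞ sin (a x) / x = π / 2` (`a > 0`). These are computed by writing `1 / x = ∫₀^∞ e^{-xy} dy`
and exchanging the order of integration.
-/

open Real Filter MeasureTheory intervalIntegral

noncomputable def sinc (x : ℝ) : ℝ := if x = 0 then 1 else Real.sin x / x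

open Set Topology

theorem sinc_eq_real_sinc : _root_.sinc = Real.sinc := rfl

lemma integral_exp_neg_mul_mul_sin (y T : ℝ) :
    ∫ x in (0:ℝ)..T, exp (-(x * y)) * sin x
      = (1 - exp (-(T * y)) * (y * sin T + cos T)) / (1 + y ^ 2) := by
  have hy : 1 + y ^ 2 ≠ 0 := by positivity
  have hderiv : ∀ x, HasDerivAt (fun x => -exp (-(x * y)) * (y * sin x + cos x) / (1 + y ^ 2))
      (exp (-(x * y)) * sin x) x := by
    intro x
    refine ((((hasDerivAt_mul_const y).neg.exp.neg).mul
      (((hasDerivAt_sin x).const_mul y).add (hasDerivAt_cos x))).div_const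
        (1 + y ^ 2)).congr_deriv ?_
    simp only [Pi.neg_apply, Pi.add_apply]
    field_simp
    ring
  rw [integral_eq_sub_of_hasDerivAt (fun x _ => hderiv x)
    ((by fun_prop : Continuous fun x => exp (-(x * y)) * sin x).intervalIntegrable 0 T)]
  simp only [zero_mul, neg_zero, exp_zero, sin_zero, cos_zero]
  field_simp
  ring

lemma integral_Ioi_exp_neg_mul {b : ℝ} (hb : 0 < b) : ∫ y in Ioi 0, exp (-(b * y)) = b⁻¹ := by
  simp_rw [← neg_mul]
  rw [integral_exp_mul_Ioi (neg_lt_zero.2 hb)]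
  simp

lemma integrableOn_exp_neg_mul {b : ℝ} (hb : 0 < b) :
    IntegrableOn (fun y => exp (-(b * y))) (Ioi 0) := by
  simpa only [neg_mul] using integrableOn_exp_mul_Ioi (neg_lt_zero.2 hb) 0

lemma integrable_exp_neg_mul_mul_sin (T : ℝ) :
    Integrable (Function.uncurry fun x y => exp (-(x * y)) * sin x)
      ((volume.restrict (Ioc 0 T)).prod (volume.restrict (Ioi 0))) := by
  have hmeas : AEStronglyMeasurable (Function.uncurry fun x y => exp (-(x * y)) * sin x)
      ((volume.restrict (Ioc 0 T)).prod (volume.restrict (Ioi 0))) :=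
    (by fun_prop : Continuous fun p : ℝ × ℝ => exp (-(p.1 * p.2)) * sin p.1).aestronglyMeasurable
  refine (integrable_prod_iff hmeas).2 ⟨?_, ?_⟩
  · refine (ae_restrict_iff' measurableSet_Ioc).2 (Eventually.of_forall fun x hx => ?_)
    exact (integrableOn_exp_neg_mul hx.1).mul_const (sin x)
  · refine Integrable.mono' (integrableOn_const (C := 1) measure_Ioc_lt_top.ne)
      hmeas.norm.integral_prod_right' ((ae_restrict_iff' measurableSet_Ioc).2
        (Eventually.of_forall fun x hx => ?_))
    have hx : 0 < x := hx.1
    simp only [Function.uncurry_apply_pair, norm_mul, norm_eq_abs, abs_exp]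
    rw [MeasureTheory.integral_mul_const, integral_Ioi_exp_neg_mul hx,
      abs_of_nonneg (by positivity), inv_mul_le_iff₀ hx, mul_one]
    exact (abs_sin_le_abs).trans_eq (abs_of_pos hx)

lemma integral_sinc_eq_integral_Ioi {T : ℝ} (hT : 0 ≤ T) :
    ∫ x in (0:ℝ)..T, Real.sinc x
      = ∫ y in Ioi 0, (1 - exp (-(T * y)) * (y * sin T + cos T)) / (1 + y ^ 2) := by
  calc ∫ x in (0:ℝ)..T, Real.sinc x
      = ∫ x in Ioc 0 T, ∫ y in Ioi 0, exp (-(x * y)) * sin x := by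
        rw [integral_of_le hT]
        refine setIntegral_congr_fun measurableSet_Ioc fun x hx => ?_
        rw [MeasureTheory.integral_mul_const, integral_Ioi_exp_neg_mul hx.1,
          sinc_of_ne_zero hx.1.ne', inv_mul_eq_div]
    _ = ∫ y in Ioi 0, ∫ x in Ioc 0 T, exp (-(x * y)) * sin x :=
        integral_integral_swap (integrable_exp_neg_mul_mul_sin T)
    _ = _ := setIntegral_congr_fun measurableSet_Ioi fun y _ => by
        rw [← integral_of_le hT, integral_exp_neg_mul_mul_sin]

noncomputable def dirichletRemainder (T : ℝ) : ℝ :=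
  ∫ y in Ioi 0, exp (-(T * y)) * (y * sin T + cos T) / (1 + y ^ 2)

lemma norm_exp_mul_sin_add_cos_div_le (T : ℝ) {y : ℝ} (hy : 0 ≤ y) :
    ‖exp (-(T * y)) * (y * sin T + cos T) / (1 + y ^ 2)‖ ≤ 2 * exp (-(T * y)) := by
  have hnum : |y * sin T + cos T| ≤ y + 1 := by
    calc |y * sin T + cos T| ≤ y * |sin T| + |cos T| := by
          simpa [abs_mul, abs_of_nonneg hy] using abs_add_le (y * sin T) (cos T)
      _ ≤ y * 1 + 1 := by gcongr <;> [exact abs_sin_le_one T; exact abs_cos_le_one T]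
      _ = y + 1 := by ring
  rw [norm_eq_abs, abs_div, abs_mul, abs_exp,
    abs_of_pos (show (0:ℝ) < 1 + y ^ 2 by positivity), div_le_iff₀ (by positivity)]
  calc exp (-(T * y)) * |y * sin T + cos T| ≤ exp (-(T * y)) * (y + 1) := by gcongr
    _ ≤ 2 * exp (-(T * y)) * (1 + y ^ 2) := by
        rw [mul_comm 2, mul_assoc]
        gcongr
        nlinarith [sq_nonneg (y - 1)]

lemma integrableOn_exp_mul_sin_add_cos_div {T : ℝ} (hT : 0 < T) :
    IntegrableOn (fun y => exp (-(T * y)) * (y * sin T + cos T) / (1 + y ^ 2)) (Ioi 0) :=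
  ((integrableOn_exp_neg_mul hT).const_mul 2).mono'
    ((by fun_prop : Continuous fun y => exp (-(T * y)) * (y * sin T + cos T)).div
      (by fun_prop) fun y => by positivity).aestronglyMeasurable
    ((ae_restrict_iff' measurableSet_Ioi).2
      (Eventually.of_forall fun _ hy => norm_exp_mul_sin_add_cos_div_le T (le_of_lt hy)))

lemma abs_dirichletRemainder_le {T : ℝ} (hT : 0 < T) : |dirichletRemainder T| ≤ 2 / T := by
  calc |dirichletRemainder T| ≤ ∫ y in Ioi 0, 2 * exp (-(T * y)) :=
        norm_integral_le_of_norm_le ((integrableOn_exp_neg_mul hT).const_mul 2)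
          ((ae_restrict_iff' measurableSet_Ioi).2
            (Eventually.of_forall fun _ hy => norm_exp_mul_sin_add_cos_div_le T (le_of_lt hy)))
    _ = 2 / T := by
        rw [MeasureTheory.integral_const_mul, integral_Ioi_exp_neg_mul hT, div_eq_mul_inv]

lemma integral_sinc_eq_pi_div_two_sub {T : ℝ} (hT : 0 < T) :
    ∫ x in (0:ℝ)..T, Real.sinc x = π / 2 - dirichletRemainder T := by
  have hπ : ∫ y in Ioi (0:ℝ), (1 + y ^ 2)⁻¹ = π / 2 := by
    rw [integral_Ioi_inv_one_add_sq, arctan_zero, sub_zero]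
  rw [integral_sinc_eq_integral_Ioi hT.le, dirichletRemainder, ← hπ,
    ← integral_sub integrable_inv_one_add_sq.integrableOn (integrableOn_exp_mul_sin_add_cos_div hT)]
  refine setIntegral_congr_fun measurableSet_Ioi fun y _ => ?_
  ring

theorem tendsto_integral_sinc :
    Tendsto (fun T => ∫ x in (0:ℝ)..T, Real.sinc x) atTop (𝓝 (π / 2)) := by
  have hR : Tendsto dirichletRemainder atTop (𝓝 0) :=
    squeeze_zero_norm' ((eventually_gt_atTop 0).mono fun T hT => abs_dirichletRemainder_le hT)
      (tendsto_const_nhds.div_atTop tendsto_id)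
  simpa using (tendsto_const_nhds (x := π / 2)).sub hR |>.congr'
    ((eventually_gt_atTop 0).mono fun T hT => (integral_sinc_eq_pi_div_two_sub hT).symm)

theorem tendsto_integral_sinc_mul {a : ℝ} (ha : 0 < a) :
    Tendsto (fun T => ∫ x in (0:ℝ)..T, Real.sinc (a * x)) atTop (𝓝 (π / (2 * a))) := by
  have h := (tendsto_integral_sinc.comp (tendsto_id.const_mul_atTop ha)).const_mul a⁻¹
  rw [inv_mul_eq_div, div_div] at h
  refine h.congr fun T => ?_
  simp [intervalIntegral.integral_comp_mul_left Real.sinc ha.ne']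

theorem integral_div_pow_three_by_parts {f f' f'' g h : ℝ → ℝ} {T : ℝ} (hT : 0 ≤ T)
    (hf : ∀ x > 0, HasDerivAt f (f' x) x) (hf' : ∀ x > 0, HasDerivAt f' (f'' x) x)
    (hg : Continuous g) (hh : Continuous h)
    (hgf : ∀ x > 0, g x = f x / x ^ 3) (hhf : ∀ x > 0, h x = f'' x / (2 * x))
    (hf_zero : Tendsto (fun x => f x / x ^ 2) (𝓝[>] 0) (𝓝 0))
    (hf'_zero : Tendsto (fun x => f' x / x) (𝓝[>] 0) (𝓝 0)) :
    ∫ x in (0:ℝ)..T, g x = -(f T / (2 * T ^ 2) + f' T / (2 * T)) + ∫ x in (0:ℝ)..T, h x := by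
  set B : ℝ → ℝ := fun x => -(f x / (2 * x ^ 2) + f' x / (2 * x))
  have hB : ∀ x > 0, HasDerivAt B (g x - h x) x := by
    intro x hx
    refine (((hf x hx).div ((hasDerivAt_pow 2 x).const_mul 2) (by positivity)).add
      ((hf' x hx).div ((hasDerivAt_id x).const_mul 2) (by simp [hx.ne']))).neg.congr_deriv ?_
    rw [hgf x hx, hhf x hx, id]
    field_simp
    ring
  -- the junk value `B 0 = 0` is exactly the limit of `B` at `0⁺`
  have hB_zero : ContinuousWithinAt B (Icc 0 T) 0 := by
    have hlim : Tendsto B (𝓝[>] 0) (𝓝 (B 0)) := by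
      simpa [B, div_mul_eq_div_div_swap] using
        ((hf_zero.div_const 2).add (hf'_zero.div_const 2)).neg
    exact (continuousWithinAt_Ioi_iff_Ici.1 hlim).mono Icc_subset_Ici_self
  have hB_cont : ContinuousOn B (Icc 0 T) := by
    intro x hx
    rcases hx.1.eq_or_lt with rfl | hx0
    · exact hB_zero
    · exact (hB x hx0).continuousAt.continuousWithinAt
  have hFTC := integral_eq_sub_of_hasDerivAt_of_le hT hB_cont (fun x hx => hB x hx.1)
    ((hg.sub hh).intervalIntegrable 0 T)
  have hB0 : B 0 = 0 := by simp [B]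
  rw [intervalIntegral.integral_sub (hg.intervalIntegrable 0 T) (hh.intervalIntegrable 0 T), hB0,
    sub_zero] at hFTC
  exact eq_add_of_sub_eq hFTC

noncomputable def trigNum (x : ℝ) : ℝ :=
  3 / 2 * sin (1 / 3 * x) - 3 / 4 * sin (7 / 3 * x) + 3 / 4 * sin (5 / 3 * x)

noncomputable def trigNumDeriv (x : ℝ) : ℝ :=
  1 / 2 * cos (1 / 3 * x) - 7 / 4 * cos (7 / 3 * x) + 5 / 4 * cos (5 / 3 * x)

noncomputable def trigNumDeriv2 (x : ℝ) : ℝ :=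
  -(1 / 6) * sin (1 / 3 * x) + 49 / 12 * sin (7 / 3 * x) - 25 / 12 * sin (5 / 3 * x)

noncomputable def sincComb (x : ℝ) : ℝ :=
  -(1 / 36) * Real.sinc (1 / 3 * x) + 343 / 72 * Real.sinc (7 / 3 * x)
    - 125 / 72 * Real.sinc (5 / 3 * x)

lemma trigNum_eq (x : ℝ) : trigNum x = 3 * sin x ^ 2 * sin (x / 3) := by
  have h7 : 7 / 3 * x = 2 * x + x / 3 := by ring
  have h5 : 5 / 3 * x = 2 * x - x / 3 := by ring
  rw [trigNum, h7, h5, one_div_mul_eq_div, sin_add, sin_sub, cos_two_mul]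
  linear_combination (-3 * sin (x / 3)) * sin_sq_add_cos_sq x

lemma hasDerivAt_trigNum (x : ℝ) : HasDerivAt trigNum (trigNumDeriv x) x := by
  refine ((((hasDerivAt_const_mul (1 / 3 : ℝ)).sin.const_mul (3 / 2)).sub
    ((hasDerivAt_const_mul (7 / 3 : ℝ)).sin.const_mul (3 / 4))).add
    ((hasDerivAt_const_mul (5 / 3 : ℝ)).sin.const_mul (3 / 4))).congr_deriv ?_
  rw [trigNumDeriv]
  ring

lemma hasDerivAt_trigNumDeriv (x : ℝ) : HasDerivAt trigNumDeriv (trigNumDeriv2 x) x := by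
  refine ((((hasDerivAt_const_mul (1 / 3 : ℝ)).cos.const_mul (1 / 2)).sub
    ((hasDerivAt_const_mul (7 / 3 : ℝ)).cos.const_mul (7 / 4))).add
    ((hasDerivAt_const_mul (5 / 3 : ℝ)).cos.const_mul (5 / 4))).congr_deriv ?_
  rw [trigNumDeriv2]
  ring

lemma sinc_mul_sinc_mul_sinc_div_three {x : ℝ} (hx : x ≠ 0) :
    Real.sinc x * Real.sinc x * Real.sinc (x / 3) = trigNum x / x ^ 3 := by
  rw [sinc_of_ne_zero hx, sinc_of_ne_zero (div_ne_zero hx three_ne_zero), trigNum_eq]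
  field_simp

lemma sincComb_eq {x : ℝ} (hx : x ≠ 0) : sincComb x = trigNumDeriv2 x / (2 * x) := by
  rw [sincComb, trigNumDeriv2, sinc_of_ne_zero (by positivity), sinc_of_ne_zero (by positivity),
    sinc_of_ne_zero (by positivity)]
  field_simp
  ring

lemma abs_trigNum_le_abs_pow_three (x : ℝ) : |trigNum x| ≤ |x| ^ 3 := by
  rw [trigNum_eq, abs_mul, abs_mul, abs_pow, abs_of_pos three_pos]
  calc 3 * |sin x| ^ 2 * |sin (x / 3)| ≤ 3 * |x| ^ 2 * |x / 3| := by
        gcongr 3 * ?_ ^ 2 * ?_ <;> exact abs_sin_le_abs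
    _ = |x| ^ 3 := by rw [abs_div, abs_of_pos (three_pos : (0:ℝ) < 3)]; ring

lemma abs_trigNum_le (x : ℝ) : |trigNum x| ≤ 3 := by
  rw [trigNum_eq, abs_mul, abs_mul, abs_pow, abs_of_pos three_pos]
  calc 3 * |sin x| ^ 2 * |sin (x / 3)| ≤ 3 * 1 ^ 2 * 1 := by
        gcongr 3 * ?_ ^ 2 * ?_ <;> exact abs_sin_le_one _
    _ = 3 := by norm_num

lemma abs_trigNumDeriv_le (x : ℝ) : |trigNumDeriv x| ≤ 7 / 2 := by
  have h1 := abs_le.1 (abs_cos_le_one (1 / 3 * x))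
  have h2 := abs_le.1 (abs_cos_le_one (7 / 3 * x))
  have h3 := abs_le.1 (abs_cos_le_one (5 / 3 * x))
  rw [trigNumDeriv, abs_le]
  constructor <;> linarith

lemma tendsto_trigNum_div_sq : Tendsto (fun x => trigNum x / x ^ 2) (𝓝[>] 0) (𝓝 0) := by
  refine squeeze_zero_norm (a := fun x => |x|) (fun x => ?_)
    ((continuous_abs.tendsto' 0 0 abs_zero).mono_left nhdsWithin_le_nhds)
  simp only [norm_div, norm_pow, norm_eq_abs]
  exact div_le_of_le_mul₀ (by positivity) (abs_nonneg x)
    ((abs_trigNum_le_abs_pow_three x).trans_eq (by ring))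

lemma tendsto_trigNumDeriv_div : Tendsto (fun x => trigNumDeriv x / x) (𝓝[>] 0) (𝓝 0) := by
  have h := hasDerivAt_iff_tendsto_slope.1 (hasDerivAt_trigNumDeriv 0)
  have h0 : trigNumDeriv 0 = 0 := by norm_num [trigNumDeriv]
  have h0' : trigNumDeriv2 0 = 0 := by simp [trigNumDeriv2]
  rw [h0'] at h
  refine (h.mono_left (nhdsWithin_mono 0 fun x hx => ne_of_gt hx)).congr fun x => ?_
  rw [slope_def_field, h0, sub_zero, sub_zero]

lemma tendsto_trigNum_boundary_atTop :
    Tendsto (fun T => -(trigNum T / (2 * T ^ 2) + trigNumDeriv T / (2 * T))) atTop (𝓝 0) := by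
  have hf := fun x => abs_le.1 (abs_trigNum_le x)
  have hf' := fun x => abs_le.1 (abs_trigNumDeriv_le x)
  simpa using ((tendsto_bdd_div_atTop_nhds_zero (.of_forall fun x => (hf x).1)
    (.of_forall fun x => (hf x).2) ((tendsto_pow_atTop two_ne_zero).const_mul_atTop two_pos)).add
    (tendsto_bdd_div_atTop_nhds_zero (.of_forall fun x => (hf' x).1)
    (.of_forall fun x => (hf' x).2) (tendsto_id.const_mul_atTop two_pos))).neg

lemma tendsto_integral_sincComb :
    Tendsto (fun T => ∫ x in (0:ℝ)..T, sincComb x) atTop (𝓝 (11 * π / 24)) := by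
  have h := (((tendsto_integral_sinc_mul (a := 1 / 3) (by norm_num)).const_mul (-(1 / 36))).add
    ((tendsto_integral_sinc_mul (a := 7 / 3) (by norm_num)).const_mul (343 / 72))).sub
    ((tendsto_integral_sinc_mul (a := 5 / 3) (by norm_num)).const_mul (125 / 72))
  convert h using 2 with T
  · have hint : ∀ a : ℝ, IntervalIntegrable (fun x => Real.sinc (a * x)) volume 0 T :=
      fun a => (by fun_prop : Continuous fun x => Real.sinc (a * x)).intervalIntegrable 0 T
    simp only [sincComb]
    rw [intervalIntegral.integral_sub (((hint _).const_mul _).add ((hint _).const_mul _))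
        ((hint _).const_mul _), intervalIntegral.integral_add ((hint _).const_mul _)
        ((hint _).const_mul _), intervalIntegral.integral_const_mul,
      intervalIntegral.integral_const_mul, intervalIntegral.integral_const_mul]
  · ring

theorem sinc_integral_example :
    Tendsto (fun T : ℝ => ∫ x in (0:ℝ)..T, _root_.sinc x * _root_.sinc x * _root_.sinc (x / 3))
      atTop (nhds (11 * π / 24)) := by
  have hIBP : ∀ T ≥ 0, ∫ x in (0:ℝ)..T, Real.sinc x * Real.sinc x * Real.sinc (x / 3)
      = -(trigNum T / (2 * T ^ 2) + trigNumDeriv T / (2 * T)) + ∫ x in (0:ℝ)..T, sincComb x :=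
    fun T hT => integral_div_pow_three_by_parts hT (fun x _ => hasDerivAt_trigNum x)
      (fun x _ => hasDerivAt_trigNumDeriv x) (by fun_prop) (by unfold sincComb; fun_prop)
      (fun x hx => sinc_mul_sinc_mul_sinc_div_three hx.ne') (fun x hx => sincComb_eq hx.ne')
      tendsto_trigNum_div_sq tendsto_trigNumDeriv_div
  rw [sinc_eq_real_sinc]
  simpa using (tendsto_trigNum_boundary_atTop.add tendsto_integral_sincComb).congr'
    ((eventually_ge_atTop 0).mono fun T hT => (hIBP T hT).symm)
end

section
/- For n ≥ 2, the partial sum ∑ₖ₌₁ⁿ 1/(2k−1) is never an integer. -/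
/-!
Let `3 ^ K` be the largest power of `3` not exceeding `2n - 1`. Every other odd number up to
`2n - 1` is divisible by a smaller power of `3`, since the next odd multiple of `3 ^ K` is
`3 ^ (K + 1)`. So the term `1 / 3 ^ K` has strictly the largest `3`-adic norm, the ultrametric
inequality makes it the norm of the whole sum, and `3 ^ K > 1` rules out an integer.
-/

open Finset

def oddHarmonic (n : ℕ) : ℚ :=
  ∑ k ∈ Icc 1 n, (1 : ℚ) / (2 * k - 1)

theorem Nat.eq_of_dvd_of_odd_of_lt_three_mul {d m : ℕ} (hdm : d ∣ m) (hm : Odd m)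
    (hlt : m < 3 * d) : m = d := by
  obtain ⟨t, rfl⟩ := hdm
  obtain ⟨s, rfl⟩ : Odd t := (Nat.odd_mul.mp hm).2
  have hs : s = 0 := by
    by_contra hs
    have : 3 * d ≤ d * (2 * s + 1) := by rw [mul_comm]; exact Nat.mul_le_mul_left d (by omega)
    omega
  simp [hs]

theorem padicNorm_inv_pow (p k : ℕ) [Fact p.Prime] :
    padicNorm p ((p : ℚ) ^ k)⁻¹ = (p : ℚ) ^ k := by
  rw [IsAbsoluteValue.abv_inv (padicNorm p), IsAbsoluteValue.abv_pow (padicNorm p),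
    padicNorm.padicNorm_p_of_prime, inv_pow, inv_inv]

theorem padicNorm_three_inv_odd_lt {m k : ℕ} (hm : Odd m) (hlt : m < 3 ^ (k + 1))
    (hne : m ≠ 3 ^ k) : padicNorm 3 (m : ℚ)⁻¹ < 3 ^ k := by
  have hndvd : ¬ 3 ^ k ∣ m := fun h =>
    hne (Nat.eq_of_dvd_of_odd_of_lt_three_mul h hm (by rwa [pow_succ, mul_comm] at hlt))
  have hnorm : ((3 : ℕ) : ℚ) ^ (-k : ℤ) < padicNorm 3 ((m : ℤ) : ℚ) := by
    rw [← not_le, ← padicNorm.dvd_iff_norm_le]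
    exact_mod_cast hndvd
  rw [IsAbsoluteValue.abv_inv (padicNorm 3)]
  calc (padicNorm 3 m)⁻¹ < (((3 : ℕ) : ℚ) ^ (-k : ℤ))⁻¹ :=
        mod_cast inv_strictAnti₀ (by positivity) hnorm
    _ = 3 ^ k := by simp

theorem padicNorm_three_oddHarmonic {n : ℕ} (hn : n ≠ 0) :
    padicNorm 3 (oddHarmonic n) = 3 ^ Nat.log 3 (2 * n - 1) := by
  set K := Nat.log 3 (2 * n - 1)
  have hle : 3 ^ K ≤ 2 * n - 1 := Nat.pow_log_le_self 3 (by omega)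
  have hlt : 2 * n - 1 < 3 ^ (K + 1) := Nat.lt_pow_succ_log_self (by norm_num) _
  obtain ⟨j, hj⟩ : Odd (3 ^ K) := Odd.pow (by decide)
  have hpeak : 2 * (j + 1) - 1 = 3 ^ K := by omega
  have hterm : ∀ i ∈ Icc 1 n, (1 : ℚ) / (2 * i - 1) = ((2 * i - 1 : ℕ) : ℚ)⁻¹ := by
    intro i hi
    rw [one_div, Nat.cast_sub (by grind), Nat.cast_mul, Nat.cast_ofNat, Nat.cast_one]
  have hnorm_peak : padicNorm 3 ((2 * (j + 1) - 1 : ℕ) : ℚ)⁻¹ = 3 ^ K := by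
    rw [hpeak, Nat.cast_pow]
    exact padicNorm_inv_pow 3 K
  rw [oddHarmonic, sum_congr rfl hterm, IsNonarchimedean.apply_sum_eq_of_lt
    (fun _ _ => padicNorm.nonarchimedean) (fun q => (padicNorm.neg q).symm) (k := j + 1)
    (by grind), hnorm_peak]
  intro i hi hij
  rw [hnorm_peak]
  exact padicNorm_three_inv_odd_lt ⟨i - 1, by grind⟩ (by grind) (by omega)

theorem odd_harmonic_not_integer (n : ℕ) (hn : 2 ≤ n) :
    ¬ ∃ z : ℤ, ∑ k ∈ Finset.Icc 1 n, (1 : ℚ) / (2 * k - 1) = z := by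
  rintro ⟨z, hz⟩
  have hnorm : padicNorm 3 (oddHarmonic n) ≤ 1 := by
    rw [oddHarmonic, hz]
    exact padicNorm.of_int z
  rw [padicNorm_three_oddHarmonic (by omega)] at hnorm
  have hlog : 1 ≤ Nat.log 3 (2 * n - 1) := Nat.log_pos (by norm_num) (by omega)
  exact hnorm.not_gt (one_lt_pow₀ (by norm_num) (by omega))
end

section
/- For every integer n ≥ 1, n! > (n/e)ⁿ·√(2πn)·exp(1/(12n + 3/(4n+2))). -/
open Real Filter Topology Stirling

/-!
Robbins' method: `log (stirlingSeq n) - log (stirlingSeq (n + 1))` is the series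
`∑ₖ (2n + 1)^(-2k) / (2k + 1)` over `k ≥ 1`, whose first two terms already exceed
`f n - f (n + 1)` for the correction `f x = 1 / (12x + 3 / (4x + 2))`. Hence
`log (stirlingSeq n) - f n` is strictly decreasing, and it tends to `log √π`.
-/

noncomputable def stirlingLowerCorrection (x : ℝ) : ℝ := 1 / (12 * x + 3 / (4 * x + 2))

theorem stirlingLowerCorrection_eq {x : ℝ} (hx : 0 ≤ x) :
    stirlingLowerCorrection x = (4 * x + 2) / (3 * (4 * x + 1) ^ 2) := by
  rw [stirlingLowerCorrection, div_eq_div_iff (by positivity) (by positivity)]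
  field_simp
  ring

theorem tendsto_stirlingLowerCorrection_atTop :
    Tendsto stirlingLowerCorrection atTop (𝓝 0) := by
  have h : Tendsto (fun x : ℝ => 12 * x + 3 / (4 * x + 2)) atTop atTop :=
    tendsto_atTop_mono' _ ((eventually_ge_atTop 0).mono fun x hx => le_add_of_nonneg_right
      (by positivity)) (tendsto_id.const_mul_atTop (by norm_num))
  exact h.inv_tendsto_atTop.congr fun x => (one_div _).symm

theorem stirlingLowerCorrection_sub_lt {x : ℝ} (hx : 1 ≤ x) :
    stirlingLowerCorrection x - stirlingLowerCorrection (x + 1) <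
      1 / (3 * (2 * x + 1) ^ 2) + 1 / (5 * (2 * x + 1) ^ 4) := by
  rw [stirlingLowerCorrection_eq (by linarith), stirlingLowerCorrection_eq (by linarith),
    ← sub_pos]
  obtain ⟨z, hz, rfl⟩ : ∃ z, 0 ≤ z ∧ x = z + 1 := ⟨x - 1, by linarith, by ring⟩
  have key : 1 / (3 * (2 * (z + 1) + 1) ^ 2) + 1 / (5 * (2 * (z + 1) + 1) ^ 4)
      - ((4 * (z + 1) + 2) / (3 * (4 * (z + 1) + 1) ^ 2)
        - (4 * (z + 1 + 1) + 2) / (3 * (4 * (z + 1 + 1) + 1) ^ 2))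
      = (448 * z ^ 4 + 2496 * z ^ 3 + 5268 * z ^ 2 + 4860 * z + 1620)
        / (15 * (2 * z + 3) ^ 4 * (4 * z + 5) ^ 2 * (4 * z + 9) ^ 2) := by
    field_simp
    ring
  rw [key]
  positivity

theorem stirlingLowerCorrection_sub_lt_log_stirlingSeq_sub (m : ℕ) :
    stirlingLowerCorrection ↑(m + 1) - stirlingLowerCorrection ↑(m + 2) <
      log (stirlingSeq (m + 1)) - log (stirlingSeq (m + 2)) := by
  calc _ < 1 / (3 * (2 * ((m : ℝ) + 1) + 1) ^ 2) + 1 / (5 * (2 * ((m : ℝ) + 1) + 1) ^ 4) := by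
        simpa [add_assoc, one_add_one_eq_two] using
          stirlingLowerCorrection_sub_lt (x := ↑(m + 1)) (by simp)
    _ = ∑ k ∈ Finset.range 2,
          (1 : ℝ) / (2 * ↑(k + 1) + 1) * ((1 / (2 * ↑(m + 1) + 1)) ^ 2) ^ (k + 1) := by
        simp only [Finset.sum_range_succ]
        push_cast
        field
    _ ≤ _ := sum_le_hasSum _ (fun k _ => by positivity) (log_stirlingSeq_sdiff_hasSum m)

theorem StrictAnti.lt_of_tendsto {α β : Type*} [TopologicalSpace α] [Preorder α]
    [OrderClosedTopology α] [PartialOrder β] [IsDirectedOrder β] [NoMaxOrder β] {f : β → α} {a : α}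
    (hf : StrictAnti f) (ha : Tendsto f atTop (𝓝 a)) (b : β) : a < f b := by
  obtain ⟨c, hc⟩ := exists_gt b
  exact (hf.antitone.le_of_tendsto ha c).trans_lt (hf hc)

theorem log_sqrt_pi_add_stirlingLowerCorrection_lt (m : ℕ) :
    log √π + stirlingLowerCorrection ↑(m + 1) < log (stirlingSeq (m + 1)) := by
  set g : ℕ → ℝ := fun k => log (stirlingSeq (k + 1)) - stirlingLowerCorrection ↑(k + 1)
  have hg : StrictAnti g := strictAnti_nat_of_succ_lt fun k => by
    have := stirlingLowerCorrection_sub_lt_log_stirlingSeq_sub k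
    simp only [g]
    linarith
  have hlim : Tendsto g atTop (𝓝 (log √π - 0)) :=
    (((continuousAt_log (by positivity)).tendsto.comp tendsto_stirlingSeq_sqrt_pi).comp
      (tendsto_add_atTop_nat 1)).sub
      (tendsto_stirlingLowerCorrection_atTop.comp
        (tendsto_natCast_atTop_atTop.comp (tendsto_add_atTop_nat 1)))
  have := hg.lt_of_tendsto hlim m
  simp only [g, sub_zero] at this
  linarith

theorem sqrt_pi_mul_exp_stirlingLowerCorrection_lt_stirlingSeq {n : ℕ} (hn : n ≠ 0) :
    √π * exp (stirlingLowerCorrection n) < stirlingSeq n := by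
  obtain ⟨m, rfl⟩ := Nat.exists_eq_succ_of_ne_zero hn
  have := exp_lt_exp.mpr (log_sqrt_pi_add_stirlingLowerCorrection_lt m)
  rwa [exp_add, exp_log (by positivity), exp_log (stirlingSeq'_pos m)] at this

theorem stirling_lower_bound (n : ℕ) (hn : 1 ≤ n) :
    (Nat.factorial n : ℝ) >
      ((n : ℝ) / Real.exp 1) ^ n * Real.sqrt (2 * π * n) *
        Real.exp (1 / (12 * n + 3 / (4 * n + 2))) := by
  have hbound :=
    sqrt_pi_mul_exp_stirlingLowerCorrection_lt_stirlingSeq (Nat.one_le_iff_ne_zero.mp hn)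
  rw [stirlingSeq, lt_div_iff₀ (by positivity)] at hbound
  calc ((n : ℝ) / exp 1) ^ n * √(2 * π * n) * exp (stirlingLowerCorrection n)
      = √π * exp (stirlingLowerCorrection n) * (√(2 * n) * (n / exp 1) ^ n) := by
        rw [mul_assoc 2, sqrt_mul' _ (by positivity), sqrt_mul' _ (by positivity),
          sqrt_mul' _ (by positivity)]
        ring
    _ < Nat.factorial n := hbound
end

section
/- For every integer n ≥ 1, n! < (n/e)ⁿ·√(2πn)·exp(1/(12n)). -/
/-!
Robbins' argument: the series expansion of `log (stirlingSeq n) - log (stirlingSeq (n + 1))`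
is dominated termwise by a geometric series summing to `1 / (12 n (n + 1))`, strictly so from
its second term on. Since `1 / (12 n (n + 1)) = 1 / (12 n) - 1 / (12 (n + 1))`, the sequence
`log (stirlingSeq n) - 1 / (12 n)` is strictly increasing, hence strictly below its limit `log √π`.
-/

open Real Filter Topology

namespace Stirling

theorem log_stirlingSeq_sdiff_lt {n : ℕ} (hn : n ≠ 0) :
    log (stirlingSeq n) - log (stirlingSeq (n + 1)) < 1 / (12 * n * (n + 1)) := by
  obtain ⟨n, rfl⟩ := Nat.exists_eq_succ_of_ne_zero hn
  set r := ((1 : ℝ) / (2 * (n + 1) + 1)) ^ 2 with hr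
  have hr0 : 0 < r := by positivity
  have hr1 : r < 1 := by grw [hr, ← n.zero_le]; norm_num
  suffices HasSum (fun j ↦ r ^ (j + 1) / 3) ((1 : ℝ) / (12 * (n + 1 : ℕ) * ((n + 1 : ℕ) + 1))) by
    refine hasSum_lt (i := 1) (fun j ↦ ?_) ?_ (log_stirlingSeq_sdiff_hasSum n) this
    · simpa [hr, field] using show (3 : ℝ) ≤ 2 * (j + 1) + 1 by norm_cast; grind
    · push_cast [← hr]
      linarith [pow_pos hr0 2]
  grind [((hasSum_geometric_of_lt_one hr0.le hr1).mul_right r).div_const 3]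

theorem strictMono_log_stirlingSeq_sub_inv :
    StrictMono fun n : ℕ ↦ log (stirlingSeq (n + 1)) - 1 / (12 * (n + 1 : ℝ)) := by
  refine strictMono_nat_of_lt_succ fun n ↦ ?_
  have hstep := log_stirlingSeq_sdiff_lt n.succ_ne_zero
  have htelescope : 1 / (12 * (n + 1 : ℝ)) - 1 / (12 * (n + 1 + 1)) =
      1 / (12 * (n + 1) * (n + 1 + 1)) := by
    field_simp
    ring
  push_cast at hstep ⊢
  linarith

theorem tendsto_log_stirlingSeq_sub_inv :
    Tendsto (fun n : ℕ ↦ log (stirlingSeq (n + 1)) - 1 / (12 * (n + 1 : ℝ))) atTop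
      (𝓝 (log √π)) := by
  have hlog := ((continuousAt_log (sqrt_pos.2 pi_pos).ne').tendsto).comp
    (tendsto_stirlingSeq_sqrt_pi.comp (tendsto_add_atTop_nat 1))
  have hinv : Tendsto (fun n : ℕ ↦ 1 / (12 * (n + 1 : ℝ))) atTop (𝓝 0) := by
    simpa [mul_comm] using tendsto_one_div_add_atTop_nhds_zero_nat.const_mul (1 / 12 : ℝ)
  simpa using hlog.sub hinv

theorem stirlingSeq_lt_sqrt_pi_mul_exp {n : ℕ} (hn : n ≠ 0) :
    stirlingSeq n < √π * exp (1 / (12 * n)) := by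
  obtain ⟨n, rfl⟩ := Nat.exists_eq_succ_of_ne_zero hn
  have hlt : log (stirlingSeq (n + 1)) - 1 / (12 * (n + 1 : ℝ)) < log √π :=
    (strictMono_log_stirlingSeq_sub_inv n.lt_succ_self).trans_le
      (strictMono_log_stirlingSeq_sub_inv.monotone.ge_of_tendsto
        tendsto_log_stirlingSeq_sub_inv _)
  rw [← exp_lt_exp, exp_sub, exp_log (stirlingSeq'_pos n), exp_log (sqrt_pos.2 pi_pos),
    div_lt_iff₀ (exp_pos _)] at hlt
  simpa using hlt

end Stirling

open Stirling

theorem stirling_upper_bound (n : ℕ) (hn : 1 ≤ n) :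
    (Nat.factorial n : ℝ) <
      ((n : ℝ) / Real.exp 1) ^ n * Real.sqrt (2 * π * n) * Real.exp (1 / (12 * n)) := by
  have hn0 : n ≠ 0 := Nat.one_le_iff_ne_zero.1 hn
  have hfactorial : (n.factorial : ℝ) = stirlingSeq n * (√(2 * n) * (n / exp 1) ^ n) := by
    rw [stirlingSeq, div_mul_cancel₀]
    positivity
  have hsqrt : √(2 * π * n) = √π * √(2 * n) := by
    rw [← sqrt_mul pi_pos.le]
    ring_nf
  rw [hfactorial, hsqrt]
  calc stirlingSeq n * (√(2 * n) * (n / exp 1) ^ n)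
      < √π * exp (1 / (12 * n)) * (√(2 * n) * (n / exp 1) ^ n) := by
        gcongr
        exact stirlingSeq_lt_sqrt_pi_mul_exp hn0
    _ = _ := by ring
end

section
/- For every integer n ≥ 1, exp(1/(12n) − 1/(12n + 3/(4n+2))) ≤ 1 + 1/(192n³). -/
/-! The exponent simplifies to `y = 1 / (12 n (4 n + 1)²)`, and `exp y ≤ 1 / (1 - y)`.
Since `12 n (4 n + 1)² = 192 n³ + 96 n² + 12 n`, clearing denominators in
`1 / (1 - y) ≤ 1 + 1 / (192 n³)` leaves `96 n² + 12 n ≥ 1`. -/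

open Real

theorem one_div_sub_one_div_add_eq {x : ℝ} (hx : 0 < x) :
    1 / (12 * x) - 1 / (12 * x + 3 / (4 * x + 2)) = 1 / (12 * x * (4 * x + 1) ^ 2) := by
  have h4 : 4 * x + 2 ≠ 0 := by positivity
  have hden : 12 * x + 3 / (4 * x + 2) = (12 * x * (4 * x + 2) + 3) / (4 * x + 2) := by
    field_simp
  rw [hden, one_div_div, div_sub_div _ _ (by positivity) (by positivity),
    div_eq_div_iff (by positivity) (by positivity)]
  ring

theorem one_div_one_sub_le_one_add {x : ℝ} (hx : 1 ≤ x) :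
    1 / (1 - 1 / (12 * x * (4 * x + 1) ^ 2)) ≤ 1 + 1 / (192 * x ^ 3) := by
  have hd : 1 < 12 * x * (4 * x + 1) ^ 2 := by nlinarith
  have hd' : 0 < 12 * x * (4 * x + 1) ^ 2 - 1 := by linarith
  have hx3 : 0 < 192 * x ^ 3 := by positivity
  have hlhs : 1 / (1 - 1 / (12 * x * (4 * x + 1) ^ 2))
      = 12 * x * (4 * x + 1) ^ 2 / (12 * x * (4 * x + 1) ^ 2 - 1) := by
    field_simp
  rw [hlhs, div_le_iff₀ hd', ← sub_nonneg]
  have hexpand : (1 + 1 / (192 * x ^ 3)) * (12 * x * (4 * x + 1) ^ 2 - 1)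
      - 12 * x * (4 * x + 1) ^ 2 = (96 * x ^ 2 + 12 * x - 1) / (192 * x ^ 3) := by
    field_simp
    ring
  rw [hexpand]
  exact div_nonneg (by nlinarith) hx3.le

theorem stirling_bounds_ratio (n : ℕ) (hn : 1 ≤ n) :
    Real.exp (1 / (12 * (n : ℝ)) - 1 / (12 * n + 3 / (4 * n + 2))) ≤
      1 + 1 / (192 * (n : ℝ) ^ 3) := by
  have hx : (1 : ℝ) ≤ n := by exact_mod_cast hn
  have hy : 1 / (12 * (n : ℝ) * (4 * n + 1) ^ 2) < 1 := by
    rw [div_lt_one (by positivity)]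
    nlinarith
  rw [one_div_sub_one_div_add_eq (by linarith)]
  exact (exp_bound_div_one_sub_of_interval (by positivity) hy).trans
    (one_div_one_sub_le_one_add hx)
end
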